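/- Let A ∈ Cl(Q) be invertible and suppose A·A = algebraMap R Cl(Q) r for some r ∈ R. Then for every X ∈ Cl(Q), P_A(P_A(X)) = P_A(X), where P_A(X) = (1/2)·(X - α(A)·X·A⁻¹). -/
import Mathlib


open CliffordAlgebra

/-- The inverse projection operator `P_A(X) = (1/2)·(X - α(A)·X·A⁻¹)` for invertible `A`. -/
noncomputable def invProj {R M : Type*} [CommRing R] [Invertible (2 : R)]
    [AddCommGroup M] [Module R M] {Q : QuadraticForm R M}
    (A : CliffordAlgebra Q) [Invertible A] (X : CliffordAlgebra Q) : CliffordAlgebra Q :=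
  ⅟(2 : R) • (X - involute A * X * ⅟A)

/-- If `A` is invertible and `A·A` is a scalar, then the inverse projection onto `A`
is idempotent: `P_A ∘ P_A = P_A`. -/
theorem invProj_invProj {R M : Type*} [CommRing R] [Invertible (2 : R)]
    [AddCommGroup M] [Module R M] {Q : QuadraticForm R M}
    (A : CliffordAlgebra Q) [Invertible A] (r : R)
    (hA : A * A = algebraMap R (CliffordAlgebra Q) r)
    (X : CliffordAlgebra Q) :
    invProj A (invProj A X) = invProj A X := by
  have h1 : involute A * involute A = algebraMap R (CliffordAlgebra Q) r := by
    rw [← map_mul, hA, AlgHom.commutes]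
  have key : involute A * (involute A * X * ⅟A) * ⅟A = X := by
    calc involute A * (involute A * X * ⅟A) * ⅟A
        = (involute A * involute A) * (X * (⅟A * ⅟A)) := by simp only [mul_assoc]
      _ = X * (algebraMap R (CliffordAlgebra Q) r * (⅟A * ⅟A)) := by
          rw [h1, ← mul_assoc, Algebra.commutes, mul_assoc]
      _ = X * ((A * A) * (⅟A * ⅟A)) := by rw [hA]
      _ = X := by
          rw [show A * A * (⅟A * ⅟A) = A * (A * ⅟A) * ⅟A by simp only [mul_assoc],
            mul_invOf_self, mul_one, mul_invOf_self, mul_one]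
  set B := involute A * X * ⅟A with hB
  have h2 : involute A * (⅟(2:R) • (X - B)) * ⅟A = ⅟(2:R) • (B - X) := by
    rw [mul_smul_comm, smul_mul_assoc, mul_sub, sub_mul, key, ← hB]
  show ⅟(2:R) • (⅟(2:R) • (X - B) - involute A * (⅟(2:R) • (X - B)) * ⅟A)
      = ⅟(2:R) • (X - B)
  rw [h2, ← smul_sub,
    show (X - B) - (B - X) = (2:R) • (X - B) by rw [two_smul]; abel,
    smul_smul, smul_smul, mul_assoc, invOf_mul_self, mul_one]
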